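/- (Theorem 1.) Let C ≥ 2 and d ≥ 1 be integers, h ∈ [0,1], and fix two distinct classes c, c' ∈ Fin C. Let V_1,…,V_d, U_1,…,U_d, U'_1,…,U'_d be 3d mutually independent Fin C-valued random variables, where each V_k and each U_k has law ν_c and each U'_k has law ν_{c'}. Let W^V, W^U be the aggregated label vectors of (V_k), (U_k) with anchor class c, and W^{U'} the aggregated label vector of (U'_k) with anchor class c'. Then E[ ∑_{a ∈ Fin C} W^V_a · W^U_a ] − E[ ∑_{a ∈ Fin C} W^V_a · W^{U'}_a ] = ( ((C−1)(h·d+1) − (1−h)·d) / ((C−1)(d+1)) )². -/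

import Mathlib

/-!
Both expectations factor by independence: `E⟪W^V, W^U⟫ = ⟪E W^V, E W^U⟫`. The mean vector
`E W^X_a = (𝟙[a = c] + d ν_c(a)) / (d + 1)` equals some `α` at the anchor class and some `β`
elsewhere, so for `c ≠ c'` the mean vectors `p` (anchor `c`) and `q` (anchor `c'`) differ only at
`c` and `c'`, and the gap `⟪p, p - q⟫` is `α (α - β) + β (β - α) = (α - β)²`.
-/

open scoped BigOperators
open MeasureTheory ProbabilityTheory

/-- `Y` has law `ν_c`: it takes the value `c` with probability `h` and each of the
other `C - 1` values with probability `(1 - h)/(C - 1)`. -/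
def HasLawNu {Ω : Type*} [MeasurableSpace Ω] {C : ℕ} (P : Measure Ω)
    (h : ℝ) (c : Fin C) (Y : Ω → Fin C) : Prop :=
  Measurable Y ∧
    ∀ a : Fin C, P (Y ⁻¹' {a}) =
      ENNReal.ofReal (if a = c then h else (1 - h) / ((C : ℝ) - 1))

/-- The aggregated label vector of the family `X` with anchor class `c`:
`W_a = (𝟙[a = c] + #{k : X_k = a})/(d+1)`. -/
noncomputable def aggW {Ω : Type*} {C : ℕ} (d : ℕ) (c : Fin C)
    (X : Fin d → Ω → Fin C) (ω : Ω) (a : Fin C) : ℝ :=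
  ((if a = c then (1 : ℝ) else 0) +
      (Finset.univ.filter fun k => X k ω = a).card) / ((d : ℝ) + 1)

lemma Fintype.sum_ite_mul_sub_sum_ite_mul {α : Type*} [Fintype α] [DecidableEq α] {c c' : α}
    (hcc' : c ≠ c') (x y : ℝ) :
    ∑ a, (if a = c then x else y) * (if a = c then x else y) -
        ∑ a, (if a = c then x else y) * (if a = c' then x else y) = (x - y) ^ 2 := by
  rw [← Finset.sum_sub_distrib, Fintype.sum_eq_add c c' hcc' fun a ⟨hac, hac'⟩ => by
    simp only [if_neg hac, if_neg hac', sub_self]]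
  simp only [if_pos, if_neg hcc', if_neg hcc'.symm]
  ring

lemma ProbabilityTheory.iIndepFun.indepFun_of_disjoint_range {Ω ι κ κ' β : Type*}
    [MeasurableSpace Ω] [MeasurableSpace β] [Fintype κ] [Fintype κ'] {P : Measure Ω}
    {f : ι → Ω → β} (hf : iIndepFun f P) (hmeas : ∀ i, Measurable (f i)) {φ : κ → ι}
    {ψ : κ' → ι} (hφψ : Disjoint (Set.range φ) (Set.range ψ)) :
    IndepFun (fun ω k => f (φ k) ω) (fun ω k => f (ψ k) ω) P := by
  classical
  have hST : Disjoint (Finset.univ.image φ) (Finset.univ.image ψ) := by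
    simpa [← Finset.disjoint_coe] using hφψ
  exact (hf.indepFun_finset _ _ hST hmeas).comp
    (measurable_pi_lambda _ fun k => measurable_pi_apply ⟨φ k, by simp⟩)
    (measurable_pi_lambda _ fun k => measurable_pi_apply ⟨ψ k, by simp⟩)

section aggW

variable {Ω : Type*} {C d : ℕ} {c : Fin C} {X : Fin d → Ω → Fin C}

lemma aggW_eq_indicator (ω : Ω) (a : Fin C) :
    aggW d c X ω a =
      ((if a = c then 1 else 0) + ∑ k, (X k ⁻¹' {a}).indicator 1 ω) / ((d : ℝ) + 1) := by
  rw [aggW, Finset.natCast_card_filter]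
  congr 2
  refine Finset.sum_congr rfl fun k _ => ?_
  by_cases hk : X k ω = a <;> simp [hk]

variable [MeasurableSpace Ω] {P : Measure Ω}

lemma integrable_aggW [IsFiniteMeasure P] (hX : ∀ k, Measurable (X k)) (a : Fin C) :
    Integrable (fun ω => aggW d c X ω a) P := by
  -- `aggW d c X ω` depends on `ω` only through the finite-valued vector `(X k ω)ₖ`.
  have hg : Integrable (fun v : Fin d → Fin C => aggW d c (fun k v => v k) v a)
      (P.map fun ω k => X k ω) := .of_finite
  exact hg.comp_measurable (measurable_pi_lambda _ hX)

lemma integral_aggW [IsProbabilityMeasure P] (hX : ∀ k, Measurable (X k)) (a : Fin C) :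
    ∫ ω, aggW d c X ω a ∂P =
      ((if a = c then 1 else 0) + ∑ k, P.real (X k ⁻¹' {a})) / ((d : ℝ) + 1) := by
  have hmeas k : MeasurableSet (X k ⁻¹' {a}) := hX k (measurableSet_singleton a)
  simp only [aggW_eq_indicator]
  rw [integral_div, integral_add (integrable_const _)
      (integrable_finsetSum _ fun k _ => (integrable_const 1).indicator (hmeas k)),
    integral_finsetSum _ fun k _ => (integrable_const 1).indicator (hmeas k)]
  simp only [integral_const, probReal_univ, one_smul, integral_indicator_one (hmeas _)]

lemma integral_aggW_of_hasLawNu [IsProbabilityMeasure P] {h : ℝ} (h0 : 0 ≤ h) (h1 : h ≤ 1)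
    (hX : ∀ k, HasLawNu P h c (X k)) (a : Fin C) :
    ∫ ω, aggW d c X ω a ∂P =
      if a = c then (1 + d * h) / (d + 1) else d * ((1 - h) / ((C : ℝ) - 1)) / (d + 1) := by
  have hC : (1 : ℝ) ≤ C := by exact_mod_cast c.pos
  have hlaw k : P.real (X k ⁻¹' {a}) = if a = c then h else (1 - h) / ((C : ℝ) - 1) := by
    rw [measureReal_def, (hX k).2, ENNReal.toReal_ofReal]
    split_ifs
    exacts [h0, div_nonneg (by linarith) (by linarith)]
  rw [integral_aggW (fun k => (hX k).1), Finset.sum_congr rfl fun k _ => hlaw k]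
  split_ifs <;> simp

lemma ProbabilityTheory.IndepFun.integral_sum_aggW_mul [IsProbabilityMeasure P] {d' : ℕ}
    {c' : Fin C} {Y : Fin d' → Ω → Fin C} (hX : ∀ k, Measurable (X k))
    (hY : ∀ k, Measurable (Y k)) (hXY : IndepFun (fun ω k => X k ω) (fun ω k => Y k ω) P) :
    ∫ ω, ∑ a, aggW d c X ω a * aggW d' c' Y ω a ∂P =
      ∑ a, (∫ ω, aggW d c X ω a ∂P) * ∫ ω, aggW d' c' Y ω a ∂P := by
  have hindep a : IndepFun (fun ω => aggW d c X ω a) (fun ω => aggW d' c' Y ω a) P := by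
    have hφ : Measurable fun v : Fin d → Fin C => aggW d c (fun k v => v k) v a := .of_discrete
    have hψ : Measurable fun v : Fin d' → Fin C => aggW d' c' (fun k v => v k) v a := .of_discrete
    exact hXY.comp hφ hψ
  rw [integral_finsetSum _ fun a _ => by
    simpa only [Pi.mul_def] using
      (hindep a).integrable_mul (integrable_aggW hX a) (integrable_aggW hY a)]
  exact Finset.sum_congr rfl fun a _ => (hindep a).integral_fun_mul_eq_mul_integral
    (integrable_aggW hX a).aestronglyMeasurable (integrable_aggW hY a).aestronglyMeasurable

end aggW

theorem expected_similarity_gap_general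
    {Ω : Type*} [MeasurableSpace Ω] (P : Measure Ω) [IsProbabilityMeasure P]
    (C d : ℕ) (hC : 2 ≤ C) (h : ℝ) (h0 : 0 ≤ h) (h1 : h ≤ 1)
    (c c' : Fin C) (hcc' : c ≠ c') (V U U' : Fin d → Ω → Fin C)
    (hlawV : ∀ k, HasLawNu P h c (V k)) (hlawU : ∀ k, HasLawNu P h c (U k))
    (hlawU' : ∀ k, HasLawNu P h c' (U' k))
    (hindep : iIndepFun (β := fun _ : Fin d ⊕ Fin d ⊕ Fin d => Fin C)
      (Sum.elim V (Sum.elim U U')) P) :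
    (∫ ω, ∑ a, aggW d c V ω a * aggW d c U ω a ∂P) -
        (∫ ω, ∑ a, aggW d c V ω a * aggW d c' U' ω a ∂P) =
      ((((C : ℝ) - 1) * (h * d + 1) - (1 - h) * d) /
          (((C : ℝ) - 1) * ((d : ℝ) + 1))) ^ 2 := by
  have hmeas : ∀ i, Measurable (Sum.elim V (Sum.elim U U') i) := by
    rintro (k | k | k)
    exacts [(hlawV k).1, (hlawU k).1, (hlawU' k).1]
  have hVU := hindep.indepFun_of_disjoint_range hmeas (φ := Sum.inl) (ψ := Sum.inr ∘ Sum.inl)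
    (by simp [Set.disjoint_range_iff])
  have hVU' := hindep.indepFun_of_disjoint_range hmeas (φ := Sum.inl) (ψ := Sum.inr ∘ Sum.inr)
    (by simp [Set.disjoint_range_iff])
  rw [hVU.integral_sum_aggW_mul (fun k => (hlawV k).1) (fun k => (hlawU k).1),
    hVU'.integral_sum_aggW_mul (fun k => (hlawV k).1) (fun k => (hlawU' k).1)]
  simp only [integral_aggW_of_hasLawNu h0 h1 hlawV, integral_aggW_of_hasLawNu h0 h1 hlawU,
    integral_aggW_of_hasLawNu h0 h1 hlawU']
  rw [Fintype.sum_ite_mul_sub_sum_ite_mul hcc']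
  have hC1 : (C : ℝ) - 1 ≠ 0 := by
    have : (2 : ℝ) ≤ C := by exact_mod_cast hC
    linarith
  congr 1
  field_simp
  ring

/-- Theorem 1 of the paper: the expected difference of the post-aggregation similarity
between a node and a same-class node versus a different-class node. -/
theorem expected_similarity_gap
    {Ω : Type*} [MeasurableSpace Ω] (P : Measure Ω) [IsProbabilityMeasure P]
    (C d : ℕ) (hC : 2 ≤ C) (hd : 1 ≤ d) (h : ℝ) (h0 : 0 ≤ h) (h1 : h ≤ 1)
    (c c' : Fin C) (hcc' : c ≠ c') (V U U' : Fin d → Ω → Fin C)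
    (hlawV : ∀ k, HasLawNu P h c (V k)) (hlawU : ∀ k, HasLawNu P h c (U k))
    (hlawU' : ∀ k, HasLawNu P h c' (U' k))
    (hindep : iIndepFun (β := fun _ : Fin d ⊕ Fin d ⊕ Fin d => Fin C)
      (Sum.elim V (Sum.elim U U')) P) :
    (∫ ω, ∑ a, aggW d c V ω a * aggW d c U ω a ∂P) -
        (∫ ω, ∑ a, aggW d c V ω a * aggW d c' U' ω a ∂P) =
      ((((C : ℝ) - 1) * (h * d + 1) - (1 - h) * d) /
          (((C : ℝ) - 1) * ((d : ℝ) + 1))) ^ 2 :=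
  expected_similarity_gap_general P C d hC h h0 h1 c c' hcc' V U U' hlawV hlawU hlawU' hindep
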